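/- arXiv:2502.04806 — 4 statements merged into one kernel-verified Lean document; each statement's English description precedes it below -/
import Mathlib

section
/- For a finite-dimensional vector space W with a pairing ⟨·,·⟩ : W ⊗ W → K, the Hamiltonian flow Ham(a) = ⟨a, ·⟩ : T(W) → T(W) of any element a ∈ |T(W)| is a K-linear derivation of the tensor algebra T(W). -/
/-!
STATEMENT 3: For a finite-dimensional vector space `W` with a pairing
`⟨·,·⟩ : W ⊗ W → K`, the Hamiltonian flow `Ham(a) = ⟨a,·⟩ : T(W) → T(W)` of an
element `a ∈ |T(W)|` is a `K`-linear derivation of the tensor algebra `T(W)`.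

Since everything is `K`-linear in `a`, and derivations form a subspace, it
suffices to treat the class of a single word `a = |u_1 ⋯ u_r|`.  The operator
`Ham(a)` is the `K`-linear map `D` determined on words by composing (i.e.
multiplying) the two tensor factors of the extended pairing:
`D(w_1⋯w_s) = Σ_{i,j} ⟨u_i, w_j⟩ · w_1⋯w_{j−1} u_{i+1}⋯u_r u_1⋯u_{i−1} w_{j+1}⋯w_s`.
The conclusion is that `D` satisfies the Leibniz rule.
-/

open TensorAlgebra in
/-- The product in `T(W)` of the word `l = [w_1, …, w_s]`. -/
noncomputable def wordProd {K W : Type*} [Field K] [AddCommGroup W] [Module K W]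
    (l : List W) : TensorAlgebra K W :=
  (l.map (TensorAlgebra.ι K)).prod

/-- `Ham(|u|)` applied to the word `w`:
`Σ_{i,j} ⟨u_i, w_j⟩ · (w_1⋯w_{j−1}u_{i+1}⋯u_r) · (u_1⋯u_{i−1}w_{j+1}⋯w_s)`. -/
noncomputable def hamApply {K W : Type*} [Field K] [AddCommGroup W] [Module K W]
    (p : W →ₗ[K] W →ₗ[K] K) (u w : List W) : TensorAlgebra K W :=
  ∑ i ∈ Finset.range u.length, ∑ j ∈ Finset.range w.length,
    p (u.getD i 0) (w.getD j 0) •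
      wordProd (w.take j ++ u.drop (i + 1) ++ u.take i ++ w.drop (j + 1))

theorem leibniz_of_span_eq_top {R A : Type*} [CommSemiring R] [Semiring A] [Algebra R A]
    {s : Set A} (hs : Submodule.span R s = ⊤) (D : A →ₗ[R] A)
    (h : ∀ a ∈ s, ∀ b ∈ s, D (a * b) = D a * b + a * D b) (x y : A) :
    D (x * y) = D x * y + x * D y := by
  have hbilin : (LinearMap.mul R A).compr₂ D =
      (LinearMap.mul R A).compl₁₂ D LinearMap.id + (LinearMap.mul R A).compl₁₂ LinearMap.id D :=
    LinearMap.ext_on hs fun a ha => LinearMap.ext_on hs fun b hb => by simpa using h a ha b hb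
  simpa using LinearMap.congr_fun₂ hbilin x y

section

variable {K W : Type*} [Field K] [AddCommGroup W] [Module K W]

theorem wordProd_append (a b : List W) :
    wordProd (K := K) (a ++ b) = wordProd a * wordProd b := by
  simp [wordProd]

theorem span_range_wordProd :
    Submodule.span K (Set.range (wordProd (K := K) (W := W))) = ⊤ := by
  rw [eq_top_iff, ← Algebra.top_toSubmodule, ← TensorAlgebra.adjoin_range_ι,
    Algebra.adjoin_eq_span]
  refine Submodule.span_mono fun z hz => ?_
  induction hz using Submonoid.closure_induction with
  | mem _ hz => obtain ⟨w, rfl⟩ := hz; exact ⟨[w], by simp [wordProd]⟩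
  | one => exact ⟨[], by simp [wordProd]⟩
  | mul _ _ _ _ ha hb =>
    obtain ⟨a, rfl⟩ := ha
    obtain ⟨b, rfl⟩ := hb
    exact ⟨a ++ b, wordProd_append a b⟩

/- The position `j` of the letter of `v ++ w` paired with `u_i` lies either in `v` or in `w`;
splitting the sum over `j` accordingly gives the two Leibniz terms. -/
theorem hamApply_append (p : W →ₗ[K] W →ₗ[K] K) (u v w : List W) :
    hamApply p u (v ++ w) = hamApply p u v * wordProd w + wordProd v * hamApply p u w := by
  simp only [hamApply, Finset.sum_mul, Finset.mul_sum, ← Finset.sum_add_distrib,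
    List.length_append, Finset.sum_range_add, smul_mul_assoc, mul_smul_comm, ← wordProd_append]
  refine Finset.sum_congr rfl fun i _ => congr_arg₂ (· + ·) ?_ ?_ <;>
    refine Finset.sum_congr rfl fun j hj => ?_
  · rw [Finset.mem_range] at hj
    rw [List.getD_append _ _ _ _ hj, List.take_append_of_le_length hj.le,
      List.drop_append_of_le_length hj]
    simp only [List.append_assoc]
  · rw [List.getD_append_right _ _ _ _ (Nat.le_add_right _ _), Nat.add_sub_cancel_left,
      List.take_length_add_append, add_assoc, List.drop_length_add_append]
    simp only [List.append_assoc]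

end

theorem ham_is_derivation_general
    (K W : Type*) [Field K] [AddCommGroup W] [Module K W]
    (p : W →ₗ[K] W →ₗ[K] K)
    (u : List W)
    (D : TensorAlgebra K W →ₗ[K] TensorAlgebra K W)
    (hD : ∀ w : List W, D (wordProd w) = hamApply p u w)
    (x y : TensorAlgebra K W) :
    D (x * y) = D x * y + x * D y := by
  refine leibniz_of_span_eq_top span_range_wordProd D ?_ x y
  rintro _ ⟨v, rfl⟩ _ ⟨w, rfl⟩
  rw [← wordProd_append, hD, hD, hD, hamApply_append]

theorem ham_is_derivation
    (K W : Type*) [Field K] [CharZero K] [AddCommGroup W] [Module K W]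
    [FiniteDimensional K W]
    (p : W →ₗ[K] W →ₗ[K] K)
    (u : List W)
    (D : TensorAlgebra K W →ₗ[K] TensorAlgebra K W)
    (hD : ∀ w : List W, D (wordProd w) = hamApply p u w)
    (x y : TensorAlgebra K W) :
    D (x * y) = D x * y + x * D y :=
  ham_is_derivation_general K W p u D hD x y
end

section
/- For a derivation action (𝔡, φ, ρ) on a B-module M with connection ∇ and curvature R = ∇², the 1-cochain c_∇ ∈ C¹_CE(𝔡, End_B(M)) satisfies (d_CE c_∇)(f ∧ g) + [c_∇(f), c_∇(g)] = i_{φ(g)} i_{φ(f)} R for all f, g ∈ 𝔡. In particular, if ∇ is flat then c_∇ is a Maurer–Cartan element: d_CE c_∇ + c_∇ ∘ c_∇ = 0. -/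
/-!
STATEMENT 5: For a derivation action `(𝔡, φ, ρ)` on a `B`-module `M` with
connection `∇` and curvature `R = ∇²`, the 1-cochain `c_∇` satisfies
`(d_CE c_∇)(f ∧ g) + [c_∇(f), c_∇(g)] = i_{φ(g)} i_{φ(f)} R`.
In particular, if `∇` is flat then `c_∇` is a Maurer–Cartan element:
`d_CE c_∇ + c_∇ ∘ c_∇ = 0`.

The spaces `E1` and `E2` play the roles of `Ω¹B ⊗_B M` and `Ω²B ⊗_B M`:
`dt b m = db ⊗ m`; `dtE b e = db · e` (wedge of `db` with an element of
`Ω¹B ⊗_B M`); `conn = ∇ : M → Ω¹B ⊗_B M`; `conn1` is the degree-raising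
extension `∇ : Ω¹B ⊗_B M → Ω²B ⊗_B M`, `ω ⊗ m ↦ dω ⊗ m − ω ∇m`;
`ctr1 f = i_{φ(f)} ⊗ id` on `E1` and `ctr2 f = i_{φ(f)} ⊗ id` on `E2`
(with the graded contraction rule `i_f(db·e) = φ(f)(b)•e − db·(i_f e)`).
`c_∇(f) = ctr1 f ∘ ∇ − ρ(f)` and
`(d_CE c_∇)(f∧g) = [ρ(f), c_∇(g)] − [ρ(g), c_∇(f)] − c_∇(⁅f,g⁆)`.
-/

theorem cnabla_maurer_cartan
    (K B M E1 E2 𝔡 : Type*) [Field K] [CharZero K] [Ring B] [Algebra K B]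
    [AddCommGroup M] [Module K M] [Module B M] [IsScalarTower K B M]
    [AddCommGroup E1] [Module K E1] [Module B E1] [IsScalarTower K B E1]
    [AddCommGroup E2] [Module K E2] [Module B E2] [IsScalarTower K B E2]
    [LieRing 𝔡] [LieAlgebra K 𝔡]
    (dt : B →ₗ[K] M →ₗ[K] E1)
    (hdt : ∀ (a b : B) (m : M), dt (a * b) m = a • dt b m + dt a (b • m))
    (dtE : B →ₗ[K] E1 →ₗ[K] E2)
    (hdtE : ∀ (a b : B) (e : E1), dtE (a * b) e = a • dtE b e + dtE a (b • e))
    (φ : 𝔡 → (B →ₗ[K] B)) (ρ : 𝔡 → (M →ₗ[K] M))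
    (hφder : ∀ f, ∀ a b : B, φ f (a * b) = φ f a * b + a * φ f b)
    (hφlie : ∀ f g, φ ⁅f, g⁆ = φ f ∘ₗ φ g - φ g ∘ₗ φ f)
    (hρlie : ∀ f g, ρ ⁅f, g⁆ = ρ f ∘ₗ ρ g - ρ g ∘ₗ ρ f)
    (hcompat : ∀ f, ∀ (b : B) (m : M), ρ f (b • m) = φ f b • m + b • ρ f m)
    (conn : M →ₗ[K] E1)
    (hconn : ∀ (b : B) (m : M), conn (b • m) = dt b m + b • conn m)
    (conn1 : E1 →ₗ[K] E2)
    (hconn1smul : ∀ (b : B) (e : E1), conn1 (b • e) = dtE b e + b • conn1 e)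
    (hconn1dt : ∀ (b : B) (m : M), conn1 (dt b m) = - dtE b (conn m))
    (ctr1 : 𝔡 → (E1 →ₗ[K] M))
    (hctr1B : ∀ f (b : B) (e : E1), ctr1 f (b • e) = b • ctr1 f e)
    (hctr1dt : ∀ f (b : B) (m : M), ctr1 f (dt b m) = φ f b • m)
    (ctr2 : 𝔡 → (E2 →ₗ[K] E1))
    (hctr2B : ∀ f (b : B) (e : E2), ctr2 f (b • e) = b • ctr2 f e)
    (hctr2dtE : ∀ f (b : B) (e : E1),
      ctr2 f (dtE b e) = φ f b • e - dt b (ctr1 f e))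
    (hspan : Submodule.span K {e : E1 | ∃ (b c : B) (m : M), e = b • dt c m} = ⊤)
    (f g : 𝔡) :
    (∀ m : M,
      (ρ f (ctr1 g (conn m) - ρ g m) - (ctr1 g (conn (ρ f m)) - ρ g (ρ f m)))
      - (ρ g (ctr1 f (conn m) - ρ f m) - (ctr1 f (conn (ρ g m)) - ρ f (ρ g m)))
      - (ctr1 ⁅f, g⁆ (conn m) - ρ ⁅f, g⁆ m)
      + ((ctr1 f (conn (ctr1 g (conn m) - ρ g m)) - ρ f (ctr1 g (conn m) - ρ g m))
         - (ctr1 g (conn (ctr1 f (conn m) - ρ f m)) - ρ g (ctr1 f (conn m) - ρ f m)))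
      = ctr1 g (ctr2 f (conn1 (conn m))))
    ∧ ((∀ m : M, conn1 (conn m) = 0) → ∀ m : M,
      (ρ f (ctr1 g (conn m) - ρ g m) - (ctr1 g (conn (ρ f m)) - ρ g (ρ f m)))
      - (ρ g (ctr1 f (conn m) - ρ f m) - (ctr1 f (conn (ρ g m)) - ρ f (ρ g m)))
      - (ctr1 ⁅f, g⁆ (conn m) - ρ ⁅f, g⁆ m)
      + ((ctr1 f (conn (ctr1 g (conn m) - ρ g m)) - ρ f (ctr1 g (conn m) - ρ g m))
         - (ctr1 g (conn (ctr1 f (conn m) - ρ f m)) - ρ g (ctr1 f (conn m) - ρ f m)))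
      = 0) := by

  have key : ∀ e : E1, ctr1 g (ctr2 f (conn1 e)) =
      ctr1 f (conn (ctr1 g e)) - ctr1 g (conn (ctr1 f e)) - ctr1 ⁅f, g⁆ e := by
    intro e
    have he : e ∈ Submodule.span K {e : E1 | ∃ (b c : B) (m : M), e = b • dt c m} := by
      rw [hspan]; trivial
    induction he using Submodule.span_induction with
    | mem e he =>
      obtain ⟨b, c, m, rfl⟩ := he
      have h1 : ctr1 f ((b : B) • dt c m) = (b * φ f c) • m := by
        rw [hctr1B, hctr1dt, smul_smul]
      have h2 : ctr1 g ((b : B) • dt c m) = (b * φ g c) • m := by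
        rw [hctr1B, hctr1dt, smul_smul]
      simp only [h1, h2, hconn, hconn1smul, hconn1dt, map_add, map_neg, map_sub,
        hctr2dtE, hctr2B, hctr1B, hctr1dt, hφlie, hφder,
        LinearMap.sub_apply, LinearMap.comp_apply, smul_smul,
        add_smul, sub_smul, smul_sub, smul_add, neg_smul, smul_neg]
      abel
    | zero => simp
    | add x y _ _ hx hy => simp only [map_add, hx, hy]; abel
    | smul a x _ hx => simp only [map_smul, hx, smul_sub]
  have main : ∀ m : M,
      (ρ f (ctr1 g (conn m) - ρ g m) - (ctr1 g (conn (ρ f m)) - ρ g (ρ f m)))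
      - (ρ g (ctr1 f (conn m) - ρ f m) - (ctr1 f (conn (ρ g m)) - ρ f (ρ g m)))
      - (ctr1 ⁅f, g⁆ (conn m) - ρ ⁅f, g⁆ m)
      + ((ctr1 f (conn (ctr1 g (conn m) - ρ g m)) - ρ f (ctr1 g (conn m) - ρ g m))
         - (ctr1 g (conn (ctr1 f (conn m) - ρ f m)) - ρ g (ctr1 f (conn m) - ρ f m)))
      = ctr1 g (ctr2 f (conn1 (conn m))) := by
    intro m
    rw [key (conn m)]
    have hρ : ρ ⁅f, g⁆ m = ρ f (ρ g m) - ρ g (ρ f m) := by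
      rw [hρlie]; rfl
    simp only [map_sub, hρ]
    abel
  refine ⟨main, fun hflat m => ?_⟩
  rw [main m, hflat m]
  simp
end

section
/- The trace map Tr : C^•_CE(𝔡, End_B(M)) → C^•_CE(𝔡, |B|), given by postcomposition with Tr : End_B(M) → |B|, is a cochain map from the twisted complex (C^•_CE(𝔡, End_B(M)), d_CE + [c_∇, ·]) to (C^•_CE(𝔡, |B|), d_CE); that is, Tr(d_CE ψ + [c_∇, ψ]) = d_CE Tr(ψ) for all cochains ψ. -/
/-!
STATEMENT 10: The trace map `Tr : C^•_CE(𝔡, End_B(M)) → C^•_CE(𝔡, |B|)`, given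
by postcomposition with the Hattori–Stallings trace `Tr : End_B(M) → |B|`, is a
cochain map from the twisted complex `(C^•_CE(𝔡, End_B(M)), d_CE + [c_∇, ·])`
to `(C^•_CE(𝔡, |B|), d_CE)`:
`Tr(d_CE ψ + [c_∇, ψ]) = d_CE Tr(ψ)` for all cochains `ψ`.

`End_B(M)` is a `𝔡`-module via `f·μ = [ρ(f), μ]` (the map `actE`), `|B|` via
`f·|b| = |φ(f)(b)|` (the map `actT`); `c f = c_∇(f) = (i_{φ(f)} ⊗ id)∘∇ − ρ(f)`
with `E` standing for `Ω¹B ⊗_B M` and `conn` for `∇`; and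
`[c_∇, ψ](x₀,…,xₙ) = Σᵢ (−1)^i (c_∇(xᵢ)∘ψ(…x̌ᵢ…) − ψ(…x̌ᵢ…)∘c_∇(xᵢ))`.
-/

def commutatorSubmodule (K B : Type*) [Field K] [Ring B] [Algebra K B] : Submodule K B :=
  Submodule.span K {x : B | ∃ a b : B, x = a * b - b * a}

def rankOne {B M : Type*} [Ring B] [AddCommGroup M] [Module B M]
    (μ : M →ₗ[B] B) (m : M) : M →ₗ[B] M where
  toFun x := μ x • m
  map_add' x y := by simp [add_smul]
  map_smul' b x := by simp [smul_eq_mul, mul_smul]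

def ceDiff {𝔡 A : Type*} [LieRing 𝔡] [AddCommGroup A]
    (act : 𝔡 → A → A) {n : ℕ} (ψ : (Fin n → 𝔡) → A) : (Fin (n + 1) → 𝔡) → A :=
  fun x =>
    (∑ i : Fin (n + 1), ((-1 : ℤ) ^ (i : ℕ)) • act (x i) (ψ fun k => x (i.succAbove k)))
    + ∑ i : Fin (n + 1), ∑ j : Fin (n + 1),
        if (i : ℕ) < (j : ℕ) then
          ((-1 : ℤ) ^ ((i : ℕ) + (j : ℕ))) •
            ψ (fun k : Fin n =>
              if (k : ℕ) = 0 then ⁅x i, x j⁆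
              else
                x ⟨if (k : ℕ) - 1 < (i : ℕ) then (k : ℕ) - 1
                   else if (k : ℕ) < (j : ℕ) then (k : ℕ) else (k : ℕ) + 1,
                  by have hk := k.isLt; split_ifs <;> omega⟩)
        else 0

theorem trace_is_cochain_map
    (K B M E 𝔡 : Type*) [Field K] [CharZero K] [Ring B] [Algebra K B]
    [AddCommGroup M] [Module K M] [Module B M] [IsScalarTower K B M]
    [Module.Finite B M] [Module.Projective B M]
    [AddCommGroup E] [Module K E] [Module B E] [IsScalarTower K B E]
    [LieRing 𝔡] [LieAlgebra K 𝔡]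
    (dt : B →ₗ[K] M →ₗ[K] E)
    (hdt : ∀ (a b : B) (m : M), dt (a * b) m = a • dt b m + dt a (b • m))
    (φ : 𝔡 → (B →ₗ[K] B)) (ρ : 𝔡 → (M →ₗ[K] M))
    (hφder : ∀ f, ∀ a b : B, φ f (a * b) = φ f a * b + a * φ f b)
    (hφlie : ∀ f g, φ ⁅f, g⁆ = φ f ∘ₗ φ g - φ g ∘ₗ φ f)
    (hρlie : ∀ f g, ρ ⁅f, g⁆ = ρ f ∘ₗ ρ g - ρ g ∘ₗ ρ f)
    (hcompat : ∀ f, ∀ (b : B) (m : M), ρ f (b • m) = φ f b • m + b • ρ f m)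
    (conn : M →ₗ[K] E)
    (hconn : ∀ (b : B) (m : M), conn (b • m) = dt b m + b • conn m)
    (ctr : 𝔡 → (E →ₗ[K] M))
    (hctrB : ∀ f (b : B) (e : E), ctr f (b • e) = b • ctr f e)
    (hctrdt : ∀ f (b : B) (m : M), ctr f (dt b m) = φ f b • m)
    (c : 𝔡 → (M →ₗ[B] M))
    (hc : ∀ f (m : M), c f m = ctr f (conn m) - ρ f m)
    (Tr : (M →ₗ[B] M) → B ⧸ commutatorSubmodule K B)
    (hTr_add : ∀ α β : M →ₗ[B] M, Tr (α + β) = Tr α + Tr β)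
    (hTr_rank : ∀ (μ : M →ₗ[B] B) (m : M),
      Tr (rankOne μ m) = Submodule.Quotient.mk (μ m))
    -- the 𝔡-action on End_B(M): f · μ = [ρ(f), μ]
    (actE : 𝔡 → (M →ₗ[B] M) → (M →ₗ[B] M))
    (hactE : ∀ f (μ : M →ₗ[B] M) (m : M), actE f μ m = ρ f (μ m) - μ (ρ f m))
    -- the 𝔡-action on |B|: f · |b| = |φ(f)(b)|
    (actT : 𝔡 → (B ⧸ commutatorSubmodule K B) → (B ⧸ commutatorSubmodule K B))
    (hactT_add : ∀ f a b, actT f (a + b) = actT f a + actT f b)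
    (hactT : ∀ f (b : B),
      actT f (Submodule.Quotient.mk b) = Submodule.Quotient.mk (φ f b))
    (n : ℕ) (ψ : (Fin n → 𝔡) → (M →ₗ[B] M)) (x : Fin (n + 1) → 𝔡) :
    Tr (ceDiff actE ψ x
        + ∑ i : Fin (n + 1), ((-1 : ℤ) ^ (i : ℕ)) •
            (c (x i) * ψ (fun k => x (i.succAbove k))
              - ψ (fun k => x (i.succAbove k)) * c (x i)))
      = ceDiff actT (fun y => Tr (ψ y)) x := by
  classical
  -- package Tr and actT as additive monoid homs
  let Tr' : (M →ₗ[B] M) →+ (B ⧸ commutatorSubmodule K B) :=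
    AddMonoidHom.mk' Tr hTr_add
  let actT' : 𝔡 → ((B ⧸ commutatorSubmodule K B) →+ (B ⧸ commutatorSubmodule K B)) :=
    fun f => AddMonoidHom.mk' (actT f) (hactT_add f)
  have key : ∀ (f : 𝔡) (μ : M →ₗ[B] M),
      Tr (actE f μ + (c f * μ - μ * c f)) = actT f (Tr μ) := by
    intro f μ
    obtain ⟨k, p, s, -, -, hps⟩ := Module.Finite.exists_comp_eq_id_of_projective B M
    set D : M →ₗ[K] M := (ctr f).comp conn with hDdef
    have hD : ∀ (b : B) (m : M), D (b • m) = φ f b • m + b • D m := by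
      intro b m
      simp only [hDdef, LinearMap.comp_apply, hconn b m, map_add, hctrB, hctrdt]
    -- dual basis elements
    set ν : Fin k → (M →ₗ[B] B) := fun i => (LinearMap.proj i).comp s with hνdef
    set sg : Fin k → (Fin k → B) := fun i => Pi.single i 1 with hsgdef
    set e : Fin k → M := fun i => p (sg i) with hedef
    have hsum : ∀ m : M, m = ∑ i, ν i m • e i := by
      intro m
      have h1 : p (s m) = m := by
        have := LinearMap.congr_fun hps m
        simpa using this
      have h2 : s m = ∑ i, (s m i) • sg i := by
        conv_lhs => rw [← Finset.univ_sum_single (s m)]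
        refine Finset.sum_congr rfl fun i _ => ?_
        funext j
        simp only [hsgdef, Pi.smul_apply, Pi.single_apply, smul_eq_mul, mul_ite, mul_one, mul_zero]
      calc m = p (s m) := h1.symm
        _ = ∑ i, ν i m • e i := by
            rw [h2, map_sum]
            refine Finset.sum_congr rfl fun i _ => ?_
            rw [map_smul]
            rfl
    have hμsum : ∀ m : M, μ m = ∑ i, ν i m • μ (e i) := by
      intro m
      conv_lhs => rw [hsum m]
      rw [map_sum]
      refine Finset.sum_congr rfl fun i _ => ?_
      rw [map_smul]
    -- the twisted maps ν'
    let ν' : Fin k → (M →ₗ[B] B) := fun i =>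
      { toFun := fun m => φ f (ν i m) - ν i (D m)
        map_add' := by
          intro a b
          simp only [map_add]
          abel
        map_smul' := by
          intro b m
          have h1 : ν i (b • m) = b * ν i m := by
            rw [map_smul]; rfl
          have h2 : ν i (D (b • m)) = φ f b * ν i m + b * ν i (D m) := by
            rw [hD, map_add]
            have ha : ν i ((φ f b) • m) = φ f b * ν i m := by rw [map_smul]; rfl
            have hb : ν i (b • D m) = b * ν i (D m) := by rw [map_smul]; rfl
            rw [ha, hb]
          simp only [h1, h2, hφder f b (ν i m), smul_eq_mul, RingHom.id_apply, mul_sub]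
          abel }
    -- operator identity
    have hop : actE f μ + (c f * μ - μ * c f)
        = ∑ i, (rankOne (ν' i) (μ (e i)) + rankOne (ν i) (D (μ (e i)))) := by
      ext m
      have hL : (actE f μ + (c f * μ - μ * c f)) m = D (μ m) - μ (D m) := by
        have h1 : D (μ m) = c f (μ m) + ρ f (μ m) := by
          rw [hc]; simp [hDdef]
        have h2 : D m = c f m + ρ f m := by
          rw [hc]; simp [hDdef]
        simp only [LinearMap.add_apply, LinearMap.sub_apply, Module.End.mul_apply,
          hactE, h1, h2, map_add]
        abel
      rw [hL]
      have hRi : ∀ i, (rankOne (ν' i) (μ (e i)) + rankOne (ν i) (D (μ (e i)))) m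
          = (φ f (ν i m) - ν i (D m)) • μ (e i) + ν i m • D (μ (e i)) := fun i => by
        simp only [LinearMap.add_apply]
        rfl
      have hsumR : (∑ i, (rankOne (ν' i) (μ (e i)) + rankOne (ν i) (D (μ (e i))))) m
          = ∑ i, ((φ f (ν i m) - ν i (D m)) • μ (e i) + ν i m • D (μ (e i))) := by
        rw [LinearMap.sum_apply]
        exact Finset.sum_congr rfl fun i _ => hRi i
      rw [hsumR]
      have hDμ : D (μ m) = ∑ i, (φ f (ν i m) • μ (e i) + ν i m • D (μ (e i))) := by
        conv_lhs => rw [hμsum m]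
        rw [map_sum]
        exact Finset.sum_congr rfl fun i _ => hD _ _
      have hμD : μ (D m) = ∑ i, ν i (D m) • μ (e i) := hμsum (D m)
      rw [hDμ, hμD, ← Finset.sum_sub_distrib]
      refine Finset.sum_congr rfl fun i _ => ?_
      rw [sub_smul]
      abel
    -- trace of LHS
    have hμop : μ = ∑ i, rankOne (ν i) (μ (e i)) := by
      ext m
      rw [LinearMap.sum_apply]
      exact hμsum m
    calc Tr (actE f μ + (c f * μ - μ * c f))
        = Tr' (∑ i, (rankOne (ν' i) (μ (e i)) + rankOne (ν i) (D (μ (e i))))) := by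
          rw [hop]; rfl
      _ = ∑ i, (Tr (rankOne (ν' i) (μ (e i))) + Tr (rankOne (ν i) (D (μ (e i))))) := by
          rw [map_sum]
          exact Finset.sum_congr rfl fun i _ => hTr_add _ _
      _ = ∑ i, Submodule.Quotient.mk (φ f (ν i (μ (e i)))) := by
          refine Finset.sum_congr rfl fun i _ => ?_
          rw [hTr_rank, hTr_rank]
          have : (ν' i) (μ (e i)) = φ f (ν i (μ (e i))) - ν i (D (μ (e i))) := rfl
          rw [this, ← Submodule.Quotient.mk_add]
          congr 1
          abel
      _ = ∑ i, actT f (Submodule.Quotient.mk (ν i (μ (e i)))) := by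
          exact Finset.sum_congr rfl fun i _ => (hactT f _).symm
      _ = actT' f (∑ i, Submodule.Quotient.mk (ν i (μ (e i)))) := by
          rw [map_sum]; rfl
      _ = actT f (Tr μ) := by
          have h3 : Tr μ = ∑ i, Submodule.Quotient.mk ((ν i) (μ (e i))) := by
            conv_lhs => rw [hμop]
            rw [show Tr (∑ i, rankOne (ν i) (μ (e i)))
                = Tr' (∑ i, rankOne (ν i) (μ (e i))) from rfl, map_sum]
            exact Finset.sum_congr rfl fun i _ => hTr_rank _ _
          rw [h3]
          rfl
  -- now the main computation
  unfold ceDiff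
  rw [show ∀ a b d : M →ₗ[B] M, a + b + d = (a + d) + b from fun a b d => by abel]
  rw [show ∀ u v : (M →ₗ[B] M), Tr (u + v) = Tr' u + Tr' v from fun u v => hTr_add u v]
  congr 1
  · -- first sums
    rw [← Finset.sum_add_distrib]
    have : (∑ i : Fin (n + 1), (((-1 : ℤ) ^ (i : ℕ)) • actE (x i) (ψ fun k => x (i.succAbove k))
        + ((-1 : ℤ) ^ (i : ℕ)) • (c (x i) * ψ (fun k => x (i.succAbove k))
            - ψ (fun k => x (i.succAbove k)) * c (x i))))
        = ∑ i : Fin (n + 1), ((-1 : ℤ) ^ (i : ℕ)) •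
            (actE (x i) (ψ fun k => x (i.succAbove k))
              + (c (x i) * ψ (fun k => x (i.succAbove k))
                  - ψ (fun k => x (i.succAbove k)) * c (x i))) := by
      exact Finset.sum_congr rfl fun i _ => (smul_add _ _ _).symm
    rw [this]
    rw [map_sum]
    refine Finset.sum_congr rfl fun i _ => ?_
    rw [AddMonoidHom.map_zsmul]
    congr 1
    exact key (x i) _
  · -- second sums (bracket terms)
    rw [map_sum]
    refine Finset.sum_congr rfl fun i _ => ?_
    rw [map_sum]
    refine Finset.sum_congr rfl fun j _ => ?_
    by_cases hij : (i : ℕ) < (j : ℕ)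
    · simp only [hij, if_true]
      exact AddMonoidHom.map_zsmul Tr' _ _
    · simp only [hij, if_false]
      exact map_zero Tr'
end

section
/- For a derivation action (𝔡, φ, ρ) on a B-module P with connection ∇ and curvature R = ∇², the adjoint action ad_f∇ = (L_{φ(f)} ⊗ id + id ⊗ λ[f]) ∘ ∇ − ∇ ∘ λ[f] satisfies ad_f∇ = D_∇(c_∇(f)) + i_{φ(f)} R in Ω^•(B, End P), where D_∇(ξ) = [∇, ξ] and c_∇(f) = i_{φ(f)}∇ − λ[f]. -/
/-!
STATEMENT 17: For a derivation action on a `B`-module `P` with connection `∇`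
and curvature `R = ∇²`, the adjoint action
`ad_f∇ = (L_{φ(f)} ⊗ id + id ⊗ λ[f]) ∘ ∇ − ∇ ∘ λ[f]`
satisfies `ad_f∇ = D_∇(c_∇(f)) + i_{φ(f)} R` in `Ω^•(B, End P)`,
where `D_∇(ξ) = [∇, ξ] = ∇∘ξ − (id ⊗ ξ)∘∇` (for `ξ` of degree 0) and
`c_∇(f) = i_{φ(f)}∇ − λ[f]`.

`E1`, `E2` stand for `Ω¹B ⊗_B P`, `Ω²B ⊗_B P` (`dt b p = db ⊗ p`,
`dtE b e = db·e`); `φf` is the derivation `φ(f)` of `B`; `lam = λ[f]` is a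
`φf`-derivation lift of `ρ(f)`; `Lf` is `L_{φ(f)} ⊗ id`; `ctr1`, `ctr2` are
the contractions `i_{φ(f)} ⊗ id` in degrees 1, 2; `conn1` is the degree-raising
extension of `∇`; and `ext2 γ = id ⊗ γ` extends an operator `γ : P → P` to
`Ω¹B ⊗_B P`.
-/

theorem adjoint_action_formula
    (K B P E1 E2 : Type*) [Field K] [CharZero K] [Ring B] [Algebra K B]
    [AddCommGroup P] [Module K P] [Module B P] [IsScalarTower K B P]
    [AddCommGroup E1] [Module K E1] [Module B E1] [IsScalarTower K B E1]
    [AddCommGroup E2] [Module K E2] [Module B E2] [IsScalarTower K B E2]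
    (dt : B →ₗ[K] P →ₗ[K] E1)
    (hdt : ∀ (a b : B) (p : P), dt (a * b) p = a • dt b p + dt a (b • p))
    (dtE : B →ₗ[K] E1 →ₗ[K] E2)
    (hdtE : ∀ (a b : B) (e : E1), dtE (a * b) e = a • dtE b e + dtE a (b • e))
    -- the derivation `φ(f)` of `B`
    (φf : B →ₗ[K] B)
    (hφf : ∀ a b : B, φf (a * b) = φf a * b + a * φf b)
    -- the `φ(f)`-derivation lift `λ[f]`
    (lam : P →ₗ[K] P)
    (hlam : ∀ (b : B) (p : P), lam (b • p) = φf b • p + b • lam p)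
    -- the connection and its extension
    (conn : P →ₗ[K] E1)
    (hconn : ∀ (b : B) (p : P), conn (b • p) = dt b p + b • conn p)
    (conn1 : E1 →ₗ[K] E2)
    (hconn1smul : ∀ (b : B) (e : E1), conn1 (b • e) = dtE b e + b • conn1 e)
    (hconn1dt : ∀ (b : B) (p : P), conn1 (dt b p) = - dtE b (conn p))
    -- contractions `i_{φ(f)} ⊗ id`
    (ctr1 : E1 →ₗ[K] P)
    (hctr1B : ∀ (b : B) (e : E1), ctr1 (b • e) = b • ctr1 e)
    (hctr1dt : ∀ (b : B) (p : P), ctr1 (dt b p) = φf b • p)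
    (ctr2 : E2 →ₗ[K] E1)
    (hctr2B : ∀ (b : B) (e : E2), ctr2 (b • e) = b • ctr2 e)
    (hctr2dtE : ∀ (b : B) (e : E1), ctr2 (dtE b e) = φf b • e - dt b (ctr1 e))
    -- the Lie derivative `L_{φ(f)} ⊗ id` on `Ω¹B ⊗_B P`
    (Lf : E1 →ₗ[K] E1)
    (hLf_smul : ∀ (b : B) (e : E1), Lf (b • e) = φf b • e + b • Lf e)
    (hLf_dt : ∀ (b : B) (p : P), Lf (dt b p) = dt (φf b) p)
    -- `ext2 γ = id ⊗ γ : Ω¹B ⊗_B P → Ω¹B ⊗_B P`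
    (ext2 : (P →ₗ[K] P) →ₗ[K] (E1 →ₗ[K] E1))
    (hext2smul : ∀ (γ : P →ₗ[K] P) (b : B) (e : E1), ext2 γ (b • e) = b • ext2 γ e)
    (hext2dt : ∀ (γ : P →ₗ[K] P) (b : B) (p : P), ext2 γ (dt b p) = dt b (γ p))
    (hspan : Submodule.span K {e : E1 | ∃ (b c : B) (p : P), e = b • dt c p} = ⊤) :
    -- `ad_f∇ = D_∇(c_∇(f)) + i_{φ(f)} R`
    ∀ p : P,
      Lf (conn p) + ext2 lam (conn p) - conn (lam p)
        = (conn (ctr1 (conn p) - lam p)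
            - ext2 (ctr1 ∘ₗ conn - lam) (conn p))
          + ctr2 (conn1 (conn p)) := by

  -- Define F = Lf - conn∘ctr1 + ext2 (ctr1∘conn) - ctr2∘conn1 and show F = 0.
  have hF : ∀ e : E1,
      Lf e - conn (ctr1 e) + ext2 (ctr1 ∘ₗ conn) e - ctr2 (conn1 e) = 0 := by
    intro e
    have he : e ∈ Submodule.span K {e : E1 | ∃ (b c : B) (p : P), e = b • dt c p} := by
      rw [hspan]; trivial
    induction he using Submodule.span_induction with
    | mem e hmem =>
        obtain ⟨b, c, p, rfl⟩ := hmem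
        rw [hLf_smul, hctr1B, hext2smul, hconn1smul, map_add, hctr2B,
          hLf_dt, hctr1dt, hext2dt, hconn1dt, hconn, hctr2dtE]
        rw [hconn, hctr1dt]
        simp only [LinearMap.comp_apply, map_neg, hctr2dtE, smul_add, smul_sub, smul_neg]
        abel
    | zero => simp
    | add x y hx hy ihx ihy =>
        simp only [map_add]
        rw [show Lf x + Lf y - (conn (ctr1 x) + conn (ctr1 y)) +
            ((ext2 (ctr1 ∘ₗ conn)) x + (ext2 (ctr1 ∘ₗ conn)) y) -
            (ctr2 (conn1 x) + ctr2 (conn1 y)) =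
            (Lf x - conn (ctr1 x) + (ext2 (ctr1 ∘ₗ conn)) x - ctr2 (conn1 x)) +
            (Lf y - conn (ctr1 y) + (ext2 (ctr1 ∘ₗ conn)) y - ctr2 (conn1 y)) from by abel,
          ihx, ihy, add_zero]
    | smul a x hx ihx =>
        simp only [map_smul, ← smul_add, ← smul_sub, ihx, smul_zero]
  intro p
  have key := hF (conn p)
  have h1 : conn (ctr1 (conn p) - lam p) = conn (ctr1 (conn p)) - conn (lam p) :=
    map_sub conn _ _
  have h2 : ext2 (ctr1 ∘ₗ conn - lam) (conn p)
      = ext2 (ctr1 ∘ₗ conn) (conn p) - ext2 lam (conn p) := by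
    rw [map_sub]; rfl
  rw [h1, h2]
  have key' : Lf (conn p)
      = conn (ctr1 (conn p)) - ext2 (ctr1 ∘ₗ conn) (conn p) + ctr2 (conn1 (conn p)) := by
    rw [← sub_eq_zero,
      show Lf (conn p) - (conn (ctr1 (conn p)) - ext2 (ctr1 ∘ₗ conn) (conn p)
        + ctr2 (conn1 (conn p)))
        = Lf (conn p) - conn (ctr1 (conn p)) + ext2 (ctr1 ∘ₗ conn) (conn p)
        - ctr2 (conn1 (conn p)) from by abel, key]
  rw [key']
  abel
end
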